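/- Substituting c00 = −d_ε^{1/2} n_x²/(2+n_x²) and c01 = d_ε^{1/2} n_x √(1−n_x²)/(1+n_x²) into the stationarity condition ∂P_win/∂n_x = 0 yields the polynomial equation n_x(4 + 28 d_ε + (12+24 d_ε) n_x² + (13+4 d_ε) n_x⁴ + 6 n_x⁶ + n_x⁸) = 0, and substituting into the normalization condition c00² + 2 c01² = 1 − d_ε yields 4 − 4 d_ε + (12−20 d_ε) n_x² + (13−14 d_ε) n_x⁴ + (6−2 d_ε) n_x⁶ + n_x⁸ = 0. -/

import Mathlib

noncomputable section

/-- Simplified winning probability of the coherence equality game,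
P_win(c00, c01, n_x) for fixed noise parameter d_ε. -/
def PwinSimp (dε c00 c01 nx : ℝ) : ℝ :=
  (1/8) * (2*c00*Real.sqrt dε*nx^2
    - 8*c01*Real.sqrt dε*nx*Real.sqrt (1-nx^2)
    - (1+3*dε)*(nx^2-2) + 4*c01^2*(1+nx^2) + c00^2*(2+nx^2))

/-- with c00 = −√d_ε n_x²/(2+n_x²) and
c01 = √d_ε n_x √(1−n_x²)/(1+n_x²), the stationarity condition
∂P_win/∂n_x = 0 yields
n_x(4 + 28d_ε + (12+24d_ε)n_x² + (13+4d_ε)n_x⁴ + 6n_x⁶ + n_x⁸) = 0,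
and the normalization c00² + 2c01² = 1 − d_ε yields
4 − 4d_ε + (12−20d_ε)n_x² + (13−14d_ε)n_x⁴ + (6−2d_ε)n_x⁶ + n_x⁸ = 0. -/
theorem stmt3 (dε nx c00 c01 : ℝ) (hdε : dε ∈ Set.Icc (0:ℝ) 1)
    (hnx : nx ∈ Set.Ioo (-1:ℝ) 1)
    (hc00 : c00 = -(Real.sqrt dε * nx^2) / (2 + nx^2))
    (hc01 : c01 = Real.sqrt dε * nx * Real.sqrt (1 - nx^2) / (1 + nx^2)) :
    (deriv (fun t => PwinSimp dε c00 c01 t) nx = 0 →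
      nx * (4 + 28*dε + (12 + 24*dε)*nx^2 + (13 + 4*dε)*nx^4 + 6*nx^6 + nx^8) = 0) ∧
    (c00^2 + 2*c01^2 = 1 - dε →
      4 - 4*dε + (12 - 20*dε)*nx^2 + (13 - 14*dε)*nx^4 + (6 - 2*dε)*nx^6 + nx^8 = 0) := by
  obtain ⟨h1, h2⟩ := hnx
  have h1n : (0:ℝ) < 1 - nx^2 := by nlinarith
  have hd0 : (0:ℝ) ≤ dε := hdε.1
  set s := Real.sqrt (1 - nx^2) with hsdef
  set r := Real.sqrt dε with hrdef
  have hs2 : s^2 = 1 - nx^2 := Real.sq_sqrt h1n.le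
  have hr2 : r^2 = dε := Real.sq_sqrt hd0
  have hspos : 0 < s := Real.sqrt_pos.2 h1n
  have hsne : s ≠ 0 := hspos.ne'
  have hAne : (2 + nx^2 : ℝ) ≠ 0 := by positivity
  have hBne : (1 + nx^2 : ℝ) ≠ 0 := by positivity
  -- closed forms
  have e2 : c01 * r = dε * nx * s / (1 + nx^2) := by
    rw [hc01]
    rw [show r * nx * s / (1 + nx^2) * r = r^2 * nx * s / (1 + nx^2) by ring, hr2]
  have e3 : c00 * r = -(dε * nx^2) / (2 + nx^2) := by
    rw [hc00]
    rw [show -(r * nx^2) / (2 + nx^2) * r = -(r^2 * nx^2) / (2 + nx^2) by ring, hr2]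
  have e4 : c01^2 = dε * nx^2 * (1 - nx^2) / (1 + nx^2)^2 := by
    rw [hc01, div_pow, mul_pow, mul_pow, hr2, hs2]
  have e5 : c00^2 = dε * nx^4 / (2 + nx^2)^2 := by
    rw [hc00, div_pow, neg_pow, mul_pow, hr2]; ring
  constructor
  · -- derivative part
    intro hD
    -- derivative of sqrt (1 - t^2)
    have hsq : HasDerivAt (fun t : ℝ => Real.sqrt (1 - t^2)) (-nx / s) nx := by
      have hin : HasDerivAt (fun t : ℝ => 1 - t^2) (-(2*nx)) nx := by
        simpa using ((hasDerivAt_pow 2 nx).const_sub 1)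
      have := (Real.hasDerivAt_sqrt h1n.ne').comp nx hin
      refine this.congr_deriv ?_
      rw [← hsdef]
      field_simp
    have ht2 : HasDerivAt (fun t : ℝ => t^2) (2*nx) nx := by
      simpa using hasDerivAt_pow 2 nx
    have hprod : HasDerivAt (fun t : ℝ => t * Real.sqrt (1 - t^2))
        (1 * s + nx * (-nx / s)) nx := by
      exact (hasDerivAt_id' nx).mul hsq
    set D : ℝ := (c00*r/4)*(2*nx) - (c01*r)*(1*s + nx*(-nx/s))
        - ((1+3*dε)/8)*(2*nx) + (c01^2/2)*(2*nx) + (c00^2/8)*(2*nx) with hDdef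
    have hg : HasDerivAt (fun t : ℝ =>
        (c00*r/4)*t^2 - (c01*r)*(t * Real.sqrt (1 - t^2))
        - ((1+3*dε)/8)*(t^2-2) + (c01^2/2)*(1+t^2) + (c00^2/8)*(2+t^2)) D nx := by
      exact ((((ht2.const_mul (c00*r/4)).sub (hprod.const_mul (c01*r))).sub
        ((ht2.sub_const 2).const_mul ((1+3*dε)/8))).add
        ((ht2.const_add 1).const_mul (c01^2/2))).add
        ((ht2.const_add 2).const_mul (c00^2/8))
    have hfun : (fun t => PwinSimp dε c00 c01 t) = (fun t : ℝ =>
        (c00*r/4)*t^2 - (c01*r)*(t * Real.sqrt (1 - t^2))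
        - ((1+3*dε)/8)*(t^2-2) + (c01^2/2)*(1+t^2) + (c00^2/8)*(2+t^2)) := by
      funext t; unfold PwinSimp; rw [hrdef]; ring
    have hDval : D = 0 := by
      rw [← hg.deriv, ← hfun, hD]
    -- rewrite D into rational form
    have estep : (1:ℝ) * s + nx * (-nx / s) = (1 - 2*nx^2)/s := by
      field_simp; linear_combination hs2
    have e6 : (c01*r)*(1*s + nx*(-nx/s)) = dε*nx*(1-2*nx^2)/(1+nx^2) := by
      rw [estep, e2]; field_simp
    have hDE : D = (-(dε*nx^2)/(2+nx^2)/4)*(2*nx) - dε*nx*(1-2*nx^2)/(1+nx^2)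
        - ((1+3*dε)/8)*(2*nx) + (dε*nx^2*(1-nx^2)/(1+nx^2)^2/2)*(2*nx)
        + (dε*nx^4/(2+nx^2)^2/8)*(2*nx) := by
      rw [hDdef, e6, e3, e4, e5]
    have key : nx * (4 + 28*dε + (12 + 24*dε)*nx^2 + (13 + 4*dε)*nx^4 + 6*nx^6 + nx^8)
        = -4*(2+nx^2)^2*(1+nx^2)^2 * ((-(dε*nx^2)/(2+nx^2)/4)*(2*nx)
        - dε*nx*(1-2*nx^2)/(1+nx^2) - ((1+3*dε)/8)*(2*nx)
        + (dε*nx^2*(1-nx^2)/(1+nx^2)^2/2)*(2*nx)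
        + (dε*nx^4/(2+nx^2)^2/8)*(2*nx)) := by
      field_simp; ring
    rw [key, ← hDE, hDval]; ring
  · intro hnorm
    rw [e4, e5] at hnorm
    have key2 : 4 - 4*dε + (12 - 20*dε)*nx^2 + (13 - 14*dε)*nx^4 + (6 - 2*dε)*nx^6 + nx^8
        = (2+nx^2)^2*(1+nx^2)^2 * (1 - dε - (dε*nx^4/(2+nx^2)^2 + 2*(dε*nx^2*(1-nx^2)/(1+nx^2)^2))) := by
      field_simp; ring
    rw [key2, hnorm]; ring
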